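/- arXiv:2001.10491 — 2 statements merged into one kernel-verified Lean document; each statement's English description precedes it below -/
import Mathlib

section
/- Let K be a field and let R be a local K-algebra with maximal ideal m. Suppose x_1,…,x_d ∈ R and K-linear derivations ∂_1,…,∂_d : R → R satisfy: ∂_i(x_i) is a unit of R for every i, and ∂_i(x_j) ∈ m whenever i ≠ j. Then there exist K-linear derivations δ_1,…,δ_d : R → R, each an R-linear combination of ∂_1,…,∂_d, such that δ_t(x_j) = 1 if t = j and δ_t(x_j) = 0 if t ≠ j. -/
/-!
Modulo the maximal ideal the matrix `A = (∂ᵢ xⱼ)` becomes diagonal with nonzero entries, so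
`det A` is a unit and `A` is invertible over `R`. Taking `δₜ = ∑ᵢ (A⁻¹)ₜᵢ • ∂ᵢ` gives
`δₜ xⱼ = (A⁻¹ A)ₜⱼ`.
-/

theorem Matrix.isUnit_det_of_isUnit_diag_of_mem_maximalIdeal
    {R n : Type*} [CommRing R] [IsLocalRing R] [Fintype n] [DecidableEq n]
    (A : Matrix n n R) (hdiag : ∀ i, IsUnit (A i i))
    (hoff : ∀ i j, i ≠ j → A i j ∈ IsLocalRing.maximalIdeal R) :
    IsUnit A.det := by
  have hdiagonal : A.map (IsLocalRing.residue R) =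
      Matrix.diagonal fun i => IsLocalRing.residue R (A i i) := by
    ext i j
    rcases eq_or_ne i j with rfl | hij
    · simp
    · simpa [hij] using hoff i j hij
  rw [← isUnit_map_iff (IsLocalRing.residue R), RingHom.map_det, RingHom.mapMatrix_apply,
    hdiagonal, det_diagonal, IsUnit.prod_iff]
  exact fun i _ => (hdiag i).map _

theorem Derivation.sum_smul_apply {K A M ι : Type*} [CommSemiring K] [CommSemiring A]
    [AddCommMonoid M] [Algebra K A] [Module A M] [Module K M] [IsScalarTower K A M]
    (s : Finset ι) (c : ι → A) (D : ι → Derivation K A M) (a : A) :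
    (∑ i ∈ s, c i • D i) a = ∑ i ∈ s, c i • D i a := by
  rw [← Derivation.coeFnAddMonoidHom_apply, map_sum, Finset.sum_apply]
  rfl

/-- Let `K` be a field and `R` a local `K`-algebra with maximal ideal `m`.
If `x_1,…,x_d ∈ R` and `K`-linear derivations `D_1,…,D_d : R → R` satisfy that `D_i (x_i)` is a
unit for every `i` and `D_i (x_j) ∈ m` for `i ≠ j`, then there are `K`-linear derivations
`δ_1,…,δ_d`, each an `R`-linear combination of the `D_i`, with `δ_t (x_j) = δₜⱼ`. -/
theorem exists_dual_derivations
    (K : Type*) [Field K] (R : Type*) [CommRing R] [IsLocalRing R] [Algebra K R]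
    (d : ℕ) (x : Fin d → R) (D : Fin d → Derivation K R R)
    (hdiag : ∀ i, IsUnit (D i (x i)))
    (hoff : ∀ i j, i ≠ j → D i (x j) ∈ IsLocalRing.maximalIdeal R) :
    ∃ δ : Fin d → Derivation K R R,
      (∀ t, ∃ c : Fin d → R, δ t = ∑ i : Fin d, c i • D i) ∧
      (∀ t j, δ t (x j) = if t = j then 1 else 0) := by
  set A : Matrix (Fin d) (Fin d) R := Matrix.of fun i j => D i (x j)
  have hA : IsUnit A.det := A.isUnit_det_of_isUnit_diag_of_mem_maximalIdeal hdiag hoff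
  refine ⟨fun t => ∑ i, A⁻¹ t i • D i, fun t => ⟨A⁻¹ t, rfl⟩, fun t j => ?_⟩
  rw [Derivation.sum_smul_apply, ← Matrix.one_apply, ← A.nonsing_inv_mul hA, Matrix.mul_apply]
  rfl
end

section
/- Let K be a field, d ≥ 1, and R = K[x_1,…,x_d] the polynomial ring with homogeneous maximal ideal m = (x_1,…,x_d). Let G be a nontrivial finite group acting on R by K-algebra automorphisms that map the space [R]_1 of homogeneous linear forms into itself, and assume the induced action of G on [R]_1 is faithful. Then for every integer n ≥ 2, dim_K( R^G / (m^n ∩ R^G) ) < dim_K( R / m^n ) = C(n−1+d, d), where C(n−1+d,d) is the binomial coefficient and R^G denotes the invariant subring. -/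
/-!
The monomials of degree `< n` are a basis of `R ⧸ mⁿ`, and counting them gives the binomial
coefficient. The invariants embed into `R ⧸ mⁿ` but cannot fill it: every `g ∈ G` preserves linear
forms, hence `m` and `mⁿ`, so if a linear form `ℓ` were congruent modulo `mⁿ` to an invariant `a`,
then `g ℓ - ℓ ≡ g a - a = 0` would be a linear form in `mⁿ` with `n ≥ 2`, i.e. zero. By
faithfulness every `g` would then be trivial.
-/

open MvPolynomial

namespace Finsupp

theorem degree_cons {M : Type*} [AddCommMonoid M] {n : ℕ} (y : M) (s : Fin n →₀ M) :
    (cons y s).degree = y + s.degree := by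
  simp only [degree_eq_sum, Fin.sum_univ_succ, cons_zero, cons_succ]

theorem natCard_degree_le (d N : ℕ) :
    Nat.card {e : Fin d →₀ ℕ // e.degree ≤ N} = (N + d).choose d := by
  classical
  have hmem (f : Fin (d + 1) →₀ ℕ) : f ∈ Finset.univ.finsuppAntidiag N ↔ f.degree = N := by
    simp [Finset.mem_finsuppAntidiag, degree_eq_sum]
  let slack : {e : Fin d →₀ ℕ // e.degree ≤ N} ≃ Finset.univ.finsuppAntidiag N :=
    { toFun e := ⟨cons (N - e.1.degree) e.1, by rw [hmem, degree_cons]; have := e.2; omega⟩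
      invFun f := ⟨tail f.1, by
        have h := (hmem _).1 f.2
        rw [← cons_tail f.1, degree_cons] at h
        omega⟩
      left_inv e := by simp [tail_cons]
      right_inv f := by
        have h := (hmem _).1 f.2
        rw [← cons_tail f.1, degree_cons] at h
        have h0 : N - f.1.tail.degree = f.1 0 := by omega
        ext1
        simp only [h0, cons_tail] }
  rw [Nat.card_congr slack, Nat.card_eq_fintype_card, Fintype.card_coe,
    Finset.card_finsuppAntidiag_nat_eq_choose, Finset.card_univ, Fintype.card_fin,
    show d + 1 + N - 1 = N + d by omega, Nat.choose_symm_add]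

end Finsupp

namespace MvPolynomial

variable {σ R : Type*}

section CommSemiring

variable [CommSemiring R]

theorem isCompl_restrictSupport_compl (s : Set (σ →₀ ℕ)) :
    IsCompl (restrictSupport R s) (restrictSupport R sᶜ) := by
  classical
  constructor
  · rw [Submodule.disjoint_def]
    intro p hs hsc
    refine support_eq_empty.1 (Finset.eq_empty_of_forall_notMem fun e he => ?_)
    exact hsc he (hs he)
  · rw [codisjoint_iff, eq_top_iff]
    intro p _
    rw [← support_sum_monomial_coeff p, ← Finset.sum_filter_add_sum_filter_not _ (· ∈ s)]
    refine Submodule.add_mem_sup (Submodule.sum_mem _ fun e he => ?_)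
      (Submodule.sum_mem _ fun e he => ?_) <;>
    · simp only [Finset.mem_filter] at he
      simp [he.2]

theorem IsHomogeneous.mem_pow_idealOfVars {p : MvPolynomial σ R} {k : ℕ}
    (hp : p.IsHomogeneous k) : p ∈ idealOfVars σ R ^ k :=
  (mem_pow_idealOfVars_iff k p).2 fun e he => by
    rw [Finsupp.degree_eq_weight_one]; exact (hp (mem_support_iff.1 he)).ge

theorem IsHomogeneous.eq_zero_of_mem_pow_idealOfVars {p : MvPolynomial σ R} {k n : ℕ}
    (hp : p.IsHomogeneous k) (hpn : p ∈ idealOfVars σ R ^ n) (hk : k < n) : p = 0 := by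
  refine support_eq_empty.1 (Finset.eq_empty_of_forall_notMem fun e he => ?_)
  have hdeg : e.degree = k := by
    rw [Finsupp.degree_eq_weight_one]; exact hp (mem_support_iff.1 he)
  have := (mem_pow_idealOfVars_iff n p).1 hpn e he
  omega

theorem map_pow_idealOfVars_le {F : Type*} [FunLike F (MvPolynomial σ R) (MvPolynomial σ R)]
    [RingHomClass F (MvPolynomial σ R) (MvPolynomial σ R)] (φ : F)
    (hφ : ∀ i, φ (X i) ∈ idealOfVars σ R) (n : ℕ) :
    (idealOfVars σ R ^ n).map φ ≤ idealOfVars σ R ^ n := by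
  rw [Ideal.map_pow]
  refine Ideal.pow_right_mono ?_ n
  rw [idealOfVars, Ideal.map_span, Ideal.span_le]
  rintro _ ⟨_, ⟨i, rfl⟩, rfl⟩
  exact hφ i

end CommSemiring

theorem map_eq_self_of_sub_mem_pow_idealOfVars [CommRing R] {F : Type*}
    [FunLike F (MvPolynomial σ R) (MvPolynomial σ R)]
    [RingHomClass F (MvPolynomial σ R) (MvPolynomial σ R)] (φ : F)
    (hφ : ∀ i, φ (X i) ∈ idealOfVars σ R)
    {a ℓ : MvPolynomial σ R} {k n : ℕ} (hℓ : ℓ.IsHomogeneous k) (hφℓ : (φ ℓ).IsHomogeneous k)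
    (hk : k < n) (ha : φ a = a) (haℓ : a - ℓ ∈ idealOfVars σ R ^ n) : φ ℓ = ℓ := by
  have hmem : φ ℓ - ℓ ∈ idealOfVars σ R ^ n := by
    have := sub_mem haℓ (map_pow_idealOfVars_le φ hφ n (Ideal.mem_map_of_mem φ haℓ))
    rwa [map_sub, ha, sub_sub_sub_cancel_left] at this
  exact sub_eq_zero.1 ((hφℓ.sub hℓ).eq_zero_of_mem_pow_idealOfVars hmem hk)

theorem finrank_quotient_pow_idealOfVars (K : Type*) [Field K] (n : ℕ) :
    Module.finrank K (MvPolynomial σ K ⧸ idealOfVars σ K ^ n) =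
      Nat.card {e : σ →₀ ℕ // e.degree < n} := by
  have hc : IsCompl ((idealOfVars σ K ^ n).restrictScalars K)
      (restrictSupport K {e : σ →₀ ℕ | e.degree < n}) := by
    rw [pow_idealOfVars, restrictScalars_restrictSupportIdeal]
    convert isCompl_restrictSupport_compl (R := K) _ using 3
    ext e; simp
  calc Module.finrank K (MvPolynomial σ K ⧸ idealOfVars σ K ^ n)
      = Module.finrank K (MvPolynomial σ K ⧸ (idealOfVars σ K ^ n).restrictScalars K) :=
        (Submodule.Quotient.restrictScalarsEquiv K _).finrank_eq.symm
    _ = Module.finrank K (restrictSupport K {e : σ →₀ ℕ | e.degree < n}) :=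
        (Submodule.quotientEquivOfIsCompl _ _ hc).finrank_eq
    _ = Nat.card {e : σ →₀ ℕ // e.degree < n} :=
        Module.finrank_eq_nat_card_basis (basisRestrictSupport K _)

end MvPolynomial

theorem Subalgebra.finrank_quotient_comap_lt {K R : Type*} [Field K] [CommRing R] [Algebra K R]
    (S : Subalgebra K R) (I : Ideal R) [FiniteDimensional K (R ⧸ I)]
    (h : ¬ Function.Surjective ((Ideal.Quotient.mkₐ K I).comp S.val)) :
    Module.finrank K (S ⧸ I.comap S.val) < Module.finrank K (R ⧸ I) := by
  let ι := Ideal.quotientMapₐ I S.val le_rfl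
  have hι : Function.Injective ι := Ideal.quotientMap_injective
  rw [← LinearMap.finrank_range_of_inj (f := ι.toLinearMap) hι]
  refine Submodule.finrank_lt fun htop => h fun r => ?_
  obtain ⟨r, rfl⟩ := Ideal.Quotient.mk_surjective r
  obtain ⟨x, hx⟩ := LinearMap.range_eq_top.1 htop (Ideal.Quotient.mk I r)
  obtain ⟨a, rfl⟩ := Ideal.Quotient.mk_surjective x
  exact ⟨a, hx⟩

theorem invariant_ring_diff_power_dim_lt_general
    (K : Type) [Field K] (d : ℕ)
    (G : Type) [Group G] [Nontrivial G]
    (ρ : G →* (MvPolynomial (Fin d) K ≃ₐ[K] MvPolynomial (Fin d) K))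
    (hlinear : ∀ g : G, ∀ f ∈ homogeneousSubmodule (Fin d) K 1,
      ρ g f ∈ homogeneousSubmodule (Fin d) K 1)
    (hfaithful : ∀ g : G, (∀ f ∈ homogeneousSubmodule (Fin d) K 1, ρ g f = f) → g = 1)
    (S : Subalgebra K (MvPolynomial (Fin d) K))
    (hS : ∀ f : MvPolynomial (Fin d) K, f ∈ S ↔ ∀ g : G, ρ g f = f)
    (m : Ideal (MvPolynomial (Fin d) K))
    (hm : m = Ideal.span (Set.range (X : Fin d → MvPolynomial (Fin d) K)))
    (n : ℕ) (hn : 2 ≤ n) :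
    Module.finrank K (↥S ⧸ Ideal.comap S.val (m ^ n)) <
      Module.finrank K (MvPolynomial (Fin d) K ⧸ m ^ n) ∧
    Module.finrank K (MvPolynomial (Fin d) K ⧸ m ^ n) = Nat.choose (n - 1 + d) d := by
  subst hm
  obtain ⟨N, rfl⟩ : ∃ N, n = N + 1 := ⟨n - 1, by omega⟩
  have hrank : Module.finrank K (MvPolynomial (Fin d) K ⧸ idealOfVars (Fin d) K ^ (N + 1)) =
      (N + d).choose d := by
    rw [finrank_quotient_pow_idealOfVars]
    simp only [Nat.lt_succ_iff, Finsupp.natCard_degree_le]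
  refine ⟨?_, by simpa using hrank⟩
  have : FiniteDimensional K (MvPolynomial (Fin d) K ⧸ idealOfVars (Fin d) K ^ (N + 1)) :=
    Module.finite_of_finrank_pos (hrank ▸ Nat.choose_pos (by omega))
  refine S.finrank_quotient_comap_lt _ fun hsurj => ?_
  obtain ⟨g, hg⟩ := exists_ne (1 : G)
  refine hg (hfaithful g fun ℓ hℓ => ?_)
  obtain ⟨a, ha⟩ := hsurj (Ideal.Quotient.mk _ ℓ)
  refine map_eq_self_of_sub_mem_pow_idealOfVars (ρ g)
    (fun i => ?_) hℓ (hlinear g ℓ hℓ) (by omega : 1 < N + 1) ((hS a).1 a.2 g)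
    (Ideal.Quotient.eq.1 ha)
  simpa using ((hlinear g _ (isHomogeneous_X K i)) : IsHomogeneous _ 1).mem_pow_idealOfVars

/-- Let `K` be a field, `d ≥ 1`, `R = K[x_1,…,x_d]` with homogeneous maximal
ideal `m = (x_1,…,x_d)`.  Let `G` be a nontrivial finite group acting on `R` by `K`-algebra
automorphisms preserving the space of linear forms, the induced action on linear forms being
faithful.  Then for every `n ≥ 2`,
`dim_K (R^G / (m^n ∩ R^G)) < dim_K (R / m^n) = C(n-1+d, d)`. -/
theorem invariant_ring_diff_power_dim_lt
    (K : Type) [Field K] (d : ℕ) (hd : 1 ≤ d)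
    (G : Type) [Group G] [Finite G] [Nontrivial G]
    (ρ : G →* (MvPolynomial (Fin d) K ≃ₐ[K] MvPolynomial (Fin d) K))
    (hlinear : ∀ g : G, ∀ f ∈ homogeneousSubmodule (Fin d) K 1,
      ρ g f ∈ homogeneousSubmodule (Fin d) K 1)
    (hfaithful : ∀ g : G, (∀ f ∈ homogeneousSubmodule (Fin d) K 1, ρ g f = f) → g = 1)
    (S : Subalgebra K (MvPolynomial (Fin d) K))
    (hS : ∀ f : MvPolynomial (Fin d) K, f ∈ S ↔ ∀ g : G, ρ g f = f)
    (m : Ideal (MvPolynomial (Fin d) K))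
    (hm : m = Ideal.span (Set.range (X : Fin d → MvPolynomial (Fin d) K)))
    (n : ℕ) (hn : 2 ≤ n) :
    Module.finrank K (↥S ⧸ Ideal.comap S.val (m ^ n)) <
      Module.finrank K (MvPolynomial (Fin d) K ⧸ m ^ n) ∧
    Module.finrank K (MvPolynomial (Fin d) K ⧸ m ^ n) = Nat.choose (n - 1 + d) d :=
  invariant_ring_diff_power_dim_lt_general K d G ρ hlinear hfaithful S hS m hm n hn
end
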